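/- arXiv:2112.14189 — 5 statements merged into one kernel-verified Lean document; each statement's English description precedes it below -/
import Mathlib

section
/- Let W be a standard one-dimensional Brownian motion and let f : [0,∞) × ℝ → ℝ be a continuous, strictly positive function. Assume that f satisfies the following two instances of the functional equation f(⟨X⟩_t, X_t) f(⟨Y⟩_t, Y_t) = f(⟨X+Y⟩_t, X_t + Y_t + ⟨X,Y⟩_t) on the class of stochastic integrals of deterministic indicator functions with respect to W: (i) for all 0 ≤ s ≤ t, almost surely f(s, W_s) · f(t − s, W_t − W_s) = f(t, W_t); and (ii) for every t ≥ 0, almost surely f(t, W_t)² = f(4t, 2W_t + t). Then there exists a constant c ∈ ℝ such that f(u, v) = exp(c v − (c/2) u) for all u ≥ 0 and v ∈ ℝ. -/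
open MeasureTheory ProbabilityTheory Real
open scoped NNReal ENNReal

noncomputable section

variable {Ω : Type*} [mΩ : MeasurableSpace Ω]

/-- The σ-algebra generated by the process `W` up to time `t`. -/
def natSigma (W : ℝ → Ω → ℝ) (t : ℝ) : MeasurableSpace Ω :=
  ⨆ s ∈ Set.Icc (0 : ℝ) t, MeasurableSpace.comap (W s) inferInstance

/-- `W` is a standard one-dimensional Brownian motion under `P`. -/
structure IsStandardBM (P : Measure Ω) (W : ℝ → Ω → ℝ) : Prop where
  isProb : IsProbabilityMeasure P
  init : ∀ ω, W 0 ω = 0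
  cont : ∀ ω, Continuous fun t => W t ω
  meas : ∀ t, Measurable (W t)
  gauss : ∀ s t : ℝ, 0 ≤ s → s ≤ t →
    P.map (fun ω => W t ω - W s ω) = gaussianReal 0 (Real.toNNReal (t - s))
  indep : ∀ s t : ℝ, 0 ≤ s → s ≤ t →
    Indep (MeasurableSpace.comap (fun ω => W t ω - W s ω) inferInstance) (natSigma W s) P

/-- The natural filtration of the process `W`, indexed by nonnegative times. -/
def natFiltration (W : ℝ → Ω → ℝ) (hW : ∀ t, Measurable (W t)) :
    Filtration ℝ≥0 mΩ where
  seq t := natSigma W (t : ℝ)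
  mono' s t hst := biSup_mono fun u hu => ⟨hu.1, hu.2.trans (NNReal.coe_le_coe.mpr hst)⟩
  le' t := iSup₂_le fun s _ => measurable_iff_comap_le.mp (hW s)

/-!
Taking logarithms, `g = log f` satisfies `g(s, a) + g(u, b) = g(s + u, a + b)` for `s, u > 0`
and all `a, b`: the increment `W_t - W_s` is independent of `W_s` and both have Gaussian laws
charging every open set, so an identity between continuous functions that holds almost surely
along `(W_s, W_t - W_s)` holds everywhere. Hence `v ↦ g(u, v) - g(u, 0)` is a continuous additive
function independent of `u`, i.e. `c v`, and `u ↦ g(u, 0)` is additive. The squaring identity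
then reads `2 g(t, 0) = g(4t, t) = 4 g(t, 0) + c t`, so `g(t, 0) = -(c/2) t`. Continuity extends
the formula from `u > 0` to `u = 0`.
-/

open Set

lemma isOpenPosMeasure_gaussianReal (μ : ℝ) {v : ℝ≥0} (hv : v ≠ 0) :
    (gaussianReal μ v).IsOpenPosMeasure :=
  (gaussianReal_absolutelyContinuous' μ hv).isOpenPosMeasure

lemma eq_of_ae_eq_comp {E Y : Type*} [TopologicalSpace E] [MeasurableSpace E]
    [OpensMeasurableSpace E] [TopologicalSpace Y] [T2Space Y] {P : Measure Ω} {X : Ω → E}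
    (hX : AEMeasurable X P) [(P.map X).IsOpenPosMeasure] {F G : E → Y}
    (hF : Continuous F) (hG : Continuous G) (h : ∀ᵐ ω ∂P, F (X ω) = G (X ω)) : F = G :=
  Measure.eq_of_ae_eq ((ae_map_iff hX (isClosed_eq hF hG).measurableSet).2 h) hF hG

namespace IsStandardBM

variable {P : Measure Ω} {W : ℝ → Ω → ℝ}

lemma map_eq_gaussianReal (hBM : IsStandardBM P W) {t : ℝ} (ht : 0 ≤ t) :
    P.map (W t) = gaussianReal 0 t.toNNReal := by
  simpa [hBM.init] using hBM.gauss 0 t le_rfl ht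

lemma indepFun_increment (hBM : IsStandardBM P W) {s t : ℝ} (hs : 0 ≤ s) (hst : s ≤ t) :
    IndepFun (W s) (fun ω => W t ω - W s ω) P := by
  rw [IndepFun_iff_Indep]
  exact indep_of_indep_of_le_left (hBM.indep s t hs hst).symm
    (le_biSup (fun r => MeasurableSpace.comap (W r) inferInstance) ⟨hs, le_rfl⟩)

lemma map_increment_eq_prod (hBM : IsStandardBM P W) {s t : ℝ} (hs : 0 ≤ s) (hst : s ≤ t) :
    P.map (fun ω => (W s ω, W t ω - W s ω))
      = (gaussianReal 0 s.toNNReal).prod (gaussianReal 0 (t - s).toNNReal) := by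
  have := hBM.isProb
  have hinc : Measurable fun ω => W t ω - W s ω := (hBM.meas t).sub (hBM.meas s)
  rw [(hBM.indepFun_increment hs hst).map_prod_eq_prod_map_map (hBM.meas s).aemeasurable
    hinc.aemeasurable, hBM.map_eq_gaussianReal hs,
    hBM.gauss s t hs hst]

variable {Y : Type*} [TopologicalSpace Y] [T2Space Y]

lemma eq_of_ae_eq_comp_apply (hBM : IsStandardBM P W) {t : ℝ} (ht : 0 < t) {F G : ℝ → Y}
    (hF : Continuous F) (hG : Continuous G) (h : ∀ᵐ ω ∂P, F (W t ω) = G (W t ω)) : F = G := by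
  have := isOpenPosMeasure_gaussianReal 0 (Real.toNNReal_pos.2 ht).ne'
  rw [← hBM.map_eq_gaussianReal ht.le] at this
  exact eq_of_ae_eq_comp (hBM.meas t).aemeasurable hF hG h

lemma eq_of_ae_eq_comp_increment (hBM : IsStandardBM P W) {s t : ℝ} (hs : 0 < s)
    (hst : s < t) {F G : ℝ × ℝ → Y} (hF : Continuous F) (hG : Continuous G)
    (h : ∀ᵐ ω ∂P, F (W s ω, W t ω - W s ω) = G (W s ω, W t ω - W s ω)) : F = G := by
  have := isOpenPosMeasure_gaussianReal 0 (Real.toNNReal_pos.2 hs).ne'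
  have := isOpenPosMeasure_gaussianReal 0 (Real.toNNReal_pos.2 (sub_pos.2 hst)).ne'
  have : (P.map fun ω => (W s ω, W t ω - W s ω)).IsOpenPosMeasure := by
    rw [hBM.map_increment_eq_prod hs.le hst.le]
    infer_instance
  exact eq_of_ae_eq_comp ((hBM.meas s).prodMk ((hBM.meas t).sub (hBM.meas s))).aemeasurable
    hF hG h

end IsStandardBM

lemma eq_mul_of_continuous_of_map_add {ψ : ℝ → ℝ} (hψ : Continuous ψ)
    (hadd : ∀ a b, ψ (a + b) = ψ a + ψ b) (a : ℝ) : ψ a = ψ 1 * a := by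
  simpa [mul_comm] using map_real_smul (AddMonoidHom.mk' ψ hadd) hψ a 1

section LogAdditive

variable {g : ℝ → ℝ → ℝ}
  (hadd : ∀ s u, 0 < s → 0 < u → ∀ a b, g s a + g u b = g (s + u) (a + b))
include hadd

lemma exists_eq_add_mul_of_add_eq (hg : Continuous (g 1)) :
    ∃ c, ∀ u, 0 < u → ∀ v, g u v = g u 0 + c * v := by
  set ψ : ℝ → ℝ := fun a => g 1 a - g 1 0
  have htrans : ∀ u, 0 < u → ∀ a, g u a = g u 0 + ψ a := by
    intro u hu a
    have h1 := hadd u 1 hu one_pos a 0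
    have h2 := hadd u 1 hu one_pos 0 a
    simp only [add_zero, zero_add] at h1 h2
    linarith
  have hψadd : ∀ a b, ψ (a + b) = ψ a + ψ b := by
    intro a b
    have h1 := hadd 1 1 one_pos one_pos a b
    have h2 := hadd 1 1 one_pos one_pos 0 0
    have h3 := htrans (1 + 1) (by norm_num) (a + b)
    simp only [add_zero] at h2
    simp only [ψ] at h3 ⊢
    linarith
  refine ⟨ψ 1, fun u hu v => ?_⟩
  rw [htrans u hu v, eq_mul_of_continuous_of_map_add (ψ := ψ) (hg.sub continuous_const) hψadd v]

lemma exists_eq_mul_sub_of_add_eq (hg : Continuous (g 1))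
    (hsq : ∀ t, 0 < t → ∀ v, 2 * g t v = g (4 * t) (2 * v + t)) :
    ∃ c, ∀ u, 0 < u → ∀ v, g u v = c * v - c / 2 * u := by
  obtain ⟨c, hc⟩ := exists_eq_add_mul_of_add_eq hadd hg
  have hdouble : ∀ s, 0 < s → g (s + s) 0 = 2 * g s 0 := fun s hs => by
    rw [two_mul, hadd s s hs hs 0 0, add_zero]
  have htime : ∀ t, 0 < t → g t 0 = -(c / 2) * t := by
    intro t ht
    have h4 : g (4 * t) 0 = 4 * g t 0 := by
      rw [show 4 * t = t + t + (t + t) by ring, hdouble _ (by linarith), hdouble t ht]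
      ring
    have := hsq t ht 0
    rw [hc (4 * t) (by linarith), h4] at this
    linarith
  exact ⟨c, fun u hu v => by rw [hc u hu, htime u hu]; ring⟩

end LogAdditive

lemma continuous_apply_of_continuousOn_uncurry {f : ℝ → ℝ → ℝ}
    (hcont : ContinuousOn (Function.uncurry f) (Ici 0 ×ˢ univ)) {u : ℝ} (hu : 0 ≤ u) :
    Continuous (f u) :=
  hcont.comp_continuous (Continuous.prodMk_right u) fun _ => ⟨hu, trivial⟩

lemma exists_eq_exp_of_mul_eq {f : ℝ → ℝ → ℝ}
    (hcont : ContinuousOn (Function.uncurry f) (Ici 0 ×ˢ univ))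
    (hpos : ∀ u v, 0 ≤ u → 0 < f u v)
    (hmul : ∀ s u, 0 < s → 0 < u → ∀ a b, f s a * f u b = f (s + u) (a + b))
    (hsq : ∀ t, 0 < t → ∀ v, f t v ^ 2 = f (4 * t) (2 * v + t)) :
    ∃ c : ℝ, ∀ u v : ℝ, 0 ≤ u → f u v = exp (c * v - c / 2 * u) := by
  obtain ⟨c, hc⟩ := exists_eq_mul_sub_of_add_eq (g := fun u v => log (f u v))
    (fun s u hs hu a b => by
      rw [← log_mul (hpos s a hs.le).ne' (hpos u b hu.le).ne', hmul s u hs hu])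
    ((continuous_apply_of_continuousOn_uncurry hcont zero_le_one).log
      fun v => (hpos 1 v zero_le_one).ne')
    (fun t ht v => by rw [← hsq t ht v, log_pow, Nat.cast_ofNat])
  have hEq : EqOn (Function.uncurry f) (fun p => exp (c * p.2 - c / 2 * p.1)) (Ioi 0 ×ˢ univ) :=
    fun p ⟨hp, _⟩ => by
      change f p.1 p.2 = exp (c * p.2 - c / 2 * p.1)
      rw [← hc p.1 hp, exp_log (hpos _ _ (le_of_lt hp))]
  have hExt := hEq.of_subset_closure hcont (by fun_prop) (prod_mono Ioi_subset_Ici_self subset_rfl)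
    (by rw [closure_prod_eq, closure_Ioi, closure_univ])
  exact ⟨c, fun u v hu => hExt (mk_mem_prod (mem_Ici.2 hu) (mem_univ v))⟩

/-- If a continuous strictly positive `f` satisfies the functional
equations (i) and (ii) along Brownian motion, then `f (u, v) = exp (c v - (c/2) u)`. -/
theorem stmt0 (P : Measure Ω) (W : ℝ → Ω → ℝ) (hBM : IsStandardBM P W)
    (f : ℝ → ℝ → ℝ)
    (hcont : ContinuousOn (Function.uncurry f) (Set.Ici (0 : ℝ) ×ˢ Set.univ))
    (hpos : ∀ u v : ℝ, 0 ≤ u → 0 < f u v)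
    (hfe : ∀ s t : ℝ, 0 ≤ s → s ≤ t →
      ∀ᵐ ω ∂P, f s (W s ω) * f (t - s) (W t ω - W s ω) = f t (W t ω))
    (hsq : ∀ t : ℝ, 0 ≤ t →
      ∀ᵐ ω ∂P, (f t (W t ω)) ^ 2 = f (4 * t) (2 * W t ω + t)) :
    ∃ c : ℝ, ∀ u v : ℝ, 0 ≤ u → f u v = Real.exp (c * v - c / 2 * u) := by
  have hslice : ∀ u, 0 ≤ u → Continuous (f u) := fun u =>
    continuous_apply_of_continuousOn_uncurry hcont
  refine exists_eq_exp_of_mul_eq hcont hpos (fun s u hs hu => ?_) (fun t ht => ?_)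
  · have hst : s < s + u := lt_add_of_pos_right s hu
    have h := hBM.eq_of_ae_eq_comp_increment hs hst
      (F := fun p => f s p.1 * f u p.2) (G := fun p => f (s + u) (p.1 + p.2))
      (((hslice s hs.le).comp continuous_fst).mul ((hslice u hu.le).comp continuous_snd))
      ((hslice (s + u) (hs.le.trans hst.le)).comp (continuous_fst.add continuous_snd))
      (by filter_upwards [hfe s (s + u) hs.le hst.le] with ω hω; simpa using hω)
    exact fun a b => congrFun h (a, b)
  · exact congrFun (hBM.eq_of_ae_eq_comp_apply ht ((hslice t ht.le).pow 2)
      ((hslice (4 * t) (by positivity)).comp (by fun_prop)) (hsq t ht.le))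

end
end

section
/- Define f : ℝ × ℝ → ℝ by f(t, x) = exp(|(2x − t)·t|^{1/3}). Then f is continuous, strictly positive, and satisfies f(t, x)² = f(4t, 2x + t) for all t ≥ 0 and x ∈ ℝ, yet there is no constant c ∈ ℝ such that f(t, x) = exp(c x − (c/2) t) for all t ≥ 0 and x ∈ ℝ. In particular, the function g(t, x) = |(2x − t)·t|^{1/3} satisfies g(4t, 2x + t) = 2 g(t, x) for all t, x ∈ ℝ. -/
lemma key_eq (t x : ℝ) :
    |(2 * (2 * x + t) - 4 * t) * (4 * t)| ^ ((1 : ℝ) / 3) =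
      2 * |(2 * x - t) * t| ^ ((1 : ℝ) / 3) := by
  have h8 : (8 : ℝ) ^ ((1 : ℝ) / 3) = 2 := by
    rw [show (8 : ℝ) = 2 ^ (3 : ℕ) by norm_num, ← Real.rpow_natCast,
      ← Real.rpow_mul (by norm_num : (0:ℝ) ≤ 2)]
    norm_num
  have h1 : (2 * (2 * x + t) - 4 * t) * (4 * t) = 8 * ((2 * x - t) * t) := by ring
  rw [h1, abs_mul, show |(8:ℝ)| = 8 by norm_num,
    Real.mul_rpow (by norm_num) (abs_nonneg _), h8]

/-- The function `f (t, x) = exp (|(2x − t) t| ^ (1/3))` is a continuous,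
strictly positive solution of `f (t, x)² = f (4t, 2x + t)` which is not of the exponential
form `exp (c x − (c/2) t)`; equivalently `g (t, x) = |(2x − t) t| ^ (1/3)` satisfies
`g (4t, 2x + t) = 2 g (t, x)`. -/
theorem stmt5 (f g : ℝ → ℝ → ℝ)
    (hf : ∀ t x : ℝ, f t x = Real.exp (|(2 * x - t) * t| ^ ((1 : ℝ) / 3)))
    (hg : ∀ t x : ℝ, g t x = |(2 * x - t) * t| ^ ((1 : ℝ) / 3)) :
    Continuous (Function.uncurry f) ∧
    (∀ t x : ℝ, 0 < f t x) ∧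
    (∀ t x : ℝ, 0 ≤ t → (f t x) ^ 2 = f (4 * t) (2 * x + t)) ∧
    (¬ ∃ c : ℝ, ∀ t x : ℝ, 0 ≤ t → f t x = Real.exp (c * x - c / 2 * t)) ∧
    (∀ t x : ℝ, g (4 * t) (2 * x + t) = 2 * g t x) := by
  refine ⟨?_, ?_, ?_, ?_, ?_⟩
  · have : Function.uncurry f = fun p : ℝ × ℝ =>
        Real.exp (|(2 * p.2 - p.1) * p.1| ^ ((1 : ℝ) / 3)) := by
      funext p; exact hf p.1 p.2
    rw [this]
    exact Real.continuous_exp.comp <|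
      ((continuous_abs.comp ((by continuity : Continuous fun p : ℝ × ℝ =>
        (2 * p.2 - p.1) * p.1))).rpow_const (fun _ => Or.inr (by norm_num)))
  · intro t x; rw [hf]; exact Real.exp_pos _
  · intro t x _
    rw [hf, hf, sq, ← Real.exp_add, ← two_mul, key_eq]
  · rintro ⟨c, hc⟩
    have h0 := hc 0 1 le_rfl
    rw [hf] at h0
    simp at h0
    have hc0 : c = 0 := by rwa [eq_comm, Real.exp_eq_one_iff] at h0
    have h1 := hc 1 1 zero_le_one
    rw [hf, hc0] at h1
    norm_num [Real.exp_eq_one_iff] at h1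
  · intro t x
    rw [hg, hg, key_eq]
end

section
/- Let f : ℝ × ℝ → ℝ be real-analytic on ℝ² and strictly positive, and suppose f(t, x)² = f(4t, 2x + t) for all t ≥ 0 and x ∈ ℝ. Then there exists a constant c ∈ ℝ such that f(t, x) = exp(c x − (c/2) t) for all t ≥ 0 and x ∈ ℝ. -/
open Filter Asymptotics Topology

/-- Any strictly positive real-analytic solution of
`f (t, x)² = f (4t, 2x + t)` (for `t ≥ 0`) is of the form `exp (c x − (c/2) t)`. -/
theorem stmt6 (f : ℝ → ℝ → ℝ)
    (hana : AnalyticOnNhd ℝ (Function.uncurry f) Set.univ)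
    (hpos : ∀ t x : ℝ, 0 < f t x)
    (hsq : ∀ t x : ℝ, 0 ≤ t → (f t x) ^ 2 = f (4 * t) (2 * x + t)) :
    ∃ c : ℝ, ∀ t x : ℝ, 0 ≤ t → f t x = Real.exp (c * x - c / 2 * t) := by
  set G : ℝ × ℝ → ℝ := fun p => Real.log (f p.1 p.2) with hGdef
  have hGdiff : DifferentiableAt ℝ G (0, 0) := by
    have h1 : DifferentiableAt ℝ (Function.uncurry f) ((0 : ℝ), (0 : ℝ)) :=
      (hana ((0 : ℝ), (0 : ℝ)) trivial).differentiableAt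
    exact h1.log (ne_of_gt (hpos 0 0))
  set L := fderiv ℝ G (0, 0) with hLdef
  have hG : HasFDerivAt G L (0, 0) := hGdiff.hasFDerivAt
  set c := L (0, 1) with hcdef
  have hf00 : f 0 0 = 1 := by
    have h := hsq 0 0 le_rfl
    norm_num at h
    have h0 := hpos 0 0
    nlinarith
  have hG00 : G (0, 0) = 0 := by simp [hGdef, hf00]
  have hlog : ∀ t x : ℝ, 0 ≤ t → G (4 * t, 2 * x + t) = 2 * G (t, x) := by
    intro t x ht
    simp only [hGdef]
    rw [← hsq t x ht, Real.log_pow]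
    norm_num
  have key : ∀ t x : ℝ, 0 ≤ t → ∀ n : ℕ,
      G (t, x) = 2 ^ n * G (t / 4 ^ n, (x - t / 2) / 2 ^ n + t / (2 * 4 ^ n)) := by
    intro t x ht n
    induction n with
    | zero =>
      norm_num
    | succ n ih =>
      have h := hlog (t / 4 ^ (n + 1)) ((x - t / 2) / 2 ^ (n + 1) + t / (2 * 4 ^ (n + 1)))
        (by positivity)
      have e1 : 4 * (t / 4 ^ (n + 1)) = t / 4 ^ n := by
        rw [pow_succ]; field_simp
      have e2 : 2 * ((x - t / 2) / 2 ^ (n + 1) + t / (2 * 4 ^ (n + 1))) + t / 4 ^ (n + 1)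
          = (x - t / 2) / 2 ^ n + t / (2 * 4 ^ n) := by
        rw [pow_succ, pow_succ]; field_simp; ring
      rw [e1, e2] at h
      rw [ih, h]; ring
  refine ⟨c, fun t x ht => ?_⟩
  have hA : G (t, x) = c * (x - t / 2) := by
    set A := x - t / 2 with hAdef
    set q : ℕ → ℝ × ℝ := fun n => (t / 2 ^ n, A + t / (2 * 2 ^ n)) with hqdef
    set p : ℕ → ℝ × ℝ := fun n => ((2 : ℝ) ^ n)⁻¹ • q n with hpdef
    have h4 : ∀ n : ℕ, (4 : ℝ) ^ n = 2 ^ n * 2 ^ n := by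
      intro n; rw [← mul_pow]; norm_num
    have hpn : ∀ n, p n = (t / 4 ^ n, A / 2 ^ n + t / (2 * 4 ^ n)) := by
      intro n
      simp only [hpdef, hqdef, Prod.smul_mk, smul_eq_mul, Prod.mk.injEq]
      constructor <;> (rw [h4]; field_simp; try ring)
    have h2 : Tendsto (fun n : ℕ => ((2 : ℝ) ^ n)⁻¹) atTop (𝓝 0) := by
      have := tendsto_pow_atTop_nhds_zero_of_lt_one
        (by norm_num : (0:ℝ) ≤ 1/2) (by norm_num : (1/2:ℝ) < 1)
      simpa [one_div, inv_pow] using this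
    have hq1 : Tendsto (fun n : ℕ => t / 2 ^ n) atTop (𝓝 0) := by
      have := h2.const_mul t
      simpa [div_eq_mul_inv] using this
    have hq2 : Tendsto (fun n : ℕ => A + t / (2 * 2 ^ n)) atTop (𝓝 A) := by
      have h' : Tendsto (fun n : ℕ => t / (2 * 2 ^ n)) atTop (𝓝 0) := by
        have h'' := h2.const_mul (t / 2)
        rw [mul_zero] at h''
        refine h''.congr fun n => ?_
        rw [div_eq_mul_inv, div_eq_mul_inv, mul_inv]
        ring
      simpa using (tendsto_const_nhds : Tendsto (fun _ : ℕ => A) atTop (𝓝 A)).add h'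
    have hq : Tendsto q atTop (𝓝 ((0 : ℝ), A)) := hq1.prodMk_nhds hq2
    have hp0 : Tendsto p atTop (𝓝 (0 : ℝ × ℝ)) := by
      have := h2.smul hq
      simpa [hpdef] using this
    have ho : (fun y => G y - L y) =o[𝓝 (0 : ℝ × ℝ)] fun y => y := by
      have hG0 : G (0 : ℝ × ℝ) = 0 := hG00
      have := hG.isLittleO
      simpa [hG0, Prod.mk_zero_zero] using this
    have ho2 : (fun n => G (p n) - L (p n)) =o[atTop] fun n => ‖p n‖ :=
      (ho.comp_tendsto hp0).norm_right
    have hmul : (fun n => (2 : ℝ) ^ n * (G (p n) - L (p n))) =o[atTop]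
        fun n => (2 : ℝ) ^ n * ‖p n‖ :=
      (isBigO_refl (fun n : ℕ => (2 : ℝ) ^ n) atTop).mul_isLittleO ho2
    have hnorm : (fun n => (2 : ℝ) ^ n * ‖p n‖) = fun n => ‖q n‖ := by
      funext n
      have h2n : (0 : ℝ) < 2 ^ n := by positivity
      rw [hpdef]
      simp only [norm_smul, norm_inv, Real.norm_eq_abs, abs_of_pos h2n]
      field_simp
    rw [hnorm] at hmul
    have hqO : (fun n => ‖q n‖) =O[atTop] (fun _ => (1 : ℝ)) :=
      (hq.isBigO_one ℝ).norm_left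
    have hlim0 : Tendsto (fun n => (2 : ℝ) ^ n * (G (p n) - L (p n))) atTop (𝓝 0) :=
      (isLittleO_one_iff ℝ).mp (hmul.trans_isBigO hqO)
    have hLq : Tendsto (fun n => L (q n)) atTop (𝓝 (L (0, A))) :=
      (L.continuous.tendsto _).comp hq
    have hconst : ∀ n, (2 : ℝ) ^ n * (G (p n) - L (p n)) + L (q n) = G (t, x) := by
      intro n
      have h2n : ((2 : ℝ) ^ n) ≠ 0 := by positivity
      have hL : L (p n) = ((2 : ℝ) ^ n)⁻¹ * L (q n) := by
        rw [hpdef, map_smul, smul_eq_mul]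
      have hstep : (2 : ℝ) ^ n * (G (p n) - L (p n)) + L (q n) = 2 ^ n * G (p n) := by
        rw [hL]; field_simp; ring
      have hk := key t x ht n
      rw [← hAdef] at hk
      rw [hstep, hpn n, ← hk]
    have hfinal : Tendsto (fun _ : ℕ => G (t, x)) atTop (𝓝 (0 + L (0, A))) := by
      have := hlim0.add hLq
      simpa [hconst] using this
    have hGtx : G (t, x) = L (0, A) := by
      have := tendsto_nhds_unique hfinal tendsto_const_nhds
      simpa using this.symm
    have hcA : L (0, A) = c * A := by
      have h01 : ((0 : ℝ), A) = A • ((0 : ℝ), (1 : ℝ)) := by simp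
      rw [h01, map_smul, smul_eq_mul, hcdef, mul_comm]
    rw [hGtx, hcA]
  have hfe : f t x = Real.exp (G (t, x)) := by
    simp only [hGdef]
    exact (Real.exp_log (hpos t x)).symm
  rw [hfe, hA]
  congr 1
  ring
end

section
/- Let h : ℝ × ℝ → ℝ be real-analytic on ℝ² and satisfy h(t, x) = (1/2) h(4t, 2x + t) for all t, x ∈ ℝ. Then there exists a constant c ∈ ℝ such that h(t, x) = c x − (c/2) t for all t, x ∈ ℝ. -/
/-!
In the coordinates `u = x - t / 2` the map `(t, x) ↦ (4t, 2x + t)` becomes the diagonal scaling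
`(t, u) ↦ (4t, 2u)`, so `g (t, u) := h (t, u + t / 2)` satisfies `g (t, u) = 2ⁿ g (t / 4ⁿ, u / 2ⁿ)`.
Since `2ⁿ • (t / 4ⁿ, u / 2ⁿ) → (0, u)` while `(t / 4ⁿ, u / 2ⁿ) → 0`, the right side tends to
`Dg(0) (0, u) = u · Dg(0) (0, 1)`, and `g` is linear in `u` alone.
-/

open Filter Topology

section Scaling

variable {F : Type*} [NormedAddCommGroup F] [NormedSpace ℝ F] {g : ℝ × ℝ → F}

lemma apply_zero_eq_zero_of_scaling (hg : ∀ p : ℝ × ℝ, g (4 * p.1, 2 * p.2) = (2 : ℝ) • g p) :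
    g 0 = 0 := by
  simpa [two_smul, Prod.mk_zero_zero] using hg 0

lemma pow_smul_apply_scaled (hg : ∀ p : ℝ × ℝ, g (4 * p.1, 2 * p.2) = (2 : ℝ) • g p)
    (p : ℝ × ℝ) (n : ℕ) : (2 : ℝ) ^ n • g (p.1 / 4 ^ n, p.2 / 2 ^ n) = g p := by
  induction n with
  | zero => simp
  | succ n ih =>
    have step := hg (p.1 / 4 ^ (n + 1), p.2 / 2 ^ (n + 1))
    have h4 : 4 * (p.1 / 4 ^ (n + 1)) = p.1 / 4 ^ n := by rw [pow_succ]; field_simp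
    have h2 : 2 * (p.2 / 2 ^ (n + 1)) = p.2 / 2 ^ n := by rw [pow_succ]; field_simp
    rw [h4, h2] at step
    rw [← ih, step, smul_smul, ← pow_succ]

theorem exists_eq_smul_of_scaling (hd : DifferentiableAt ℝ g 0)
    (hg : ∀ p : ℝ × ℝ, g (4 * p.1, 2 * p.2) = (2 : ℝ) • g p) :
    ∃ c : F, ∀ p : ℝ × ℝ, g p = p.2 • c := by
  refine ⟨fderiv ℝ g 0 (0, 1), fun p => ?_⟩
  have hhalf : Tendsto (fun n : ℕ => (1 / 2 : ℝ) ^ n) atTop (𝓝 0) :=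
    tendsto_pow_atTop_nhds_zero_of_lt_one (by norm_num) (by norm_num)
  have hquarter : Tendsto (fun n : ℕ => (1 / 4 : ℝ) ^ n) atTop (𝓝 0) :=
    tendsto_pow_atTop_nhds_zero_of_lt_one (by norm_num) (by norm_num)
  have hdlim : Tendsto (fun n : ℕ => (p.1 / 4 ^ n, p.2 / 2 ^ n)) atTop (𝓝 0) := by
    rw [← Prod.mk_zero_zero]
    refine .prodMk_nhds ?_ ?_
    · simpa [div_eq_mul_inv] using hquarter.const_mul p.1
    · simpa [div_eq_mul_inv] using hhalf.const_mul p.2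
  have hcdlim : Tendsto (fun n : ℕ => (2 : ℝ) ^ n • (p.1 / 4 ^ n, p.2 / 2 ^ n)) atTop
      (𝓝 ((0 : ℝ), p.2)) := by
    have h42 (n : ℕ) : (2 : ℝ) ^ n • (p.1 / 4 ^ n, p.2 / 2 ^ n) = (p.1 * (1 / 2) ^ n, p.2) := by
      rw [Prod.smul_mk, smul_eq_mul, smul_eq_mul, one_div_pow, show (4 : ℝ) ^ n = 2 ^ n * 2 ^ n by
        rw [← mul_pow]; norm_num]
      field_simp
    simp only [h42]
    refine .prodMk_nhds ?_ tendsto_const_nhds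
    simpa using hhalf.const_mul p.1
  have hlim := (hasFDerivWithinAt_univ.2 hd.hasFDerivAt).lim hdlim
    (.of_forall fun _ => Set.mem_univ _) hcdlim
  simp only [zero_add, apply_zero_eq_zero_of_scaling hg, sub_zero,
    pow_smul_apply_scaled hg] at hlim
  rw [tendsto_const_nhds_iff.1 hlim, ← map_smul]
  simp

end Scaling

/-- Any real-analytic solution of `h (t, x) = (1/2) h (4t, 2x + t)` on `ℝ²`
is of the linear form `h (t, x) = c x − (c/2) t`. -/
theorem stmt7 (h : ℝ → ℝ → ℝ)
    (hana : AnalyticOnNhd ℝ (Function.uncurry h) Set.univ)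
    (heq : ∀ t x : ℝ, h t x = (1 / 2) * h (4 * t) (2 * x + t)) :
    ∃ c : ℝ, ∀ t x : ℝ, h t x = c * x - c / 2 * t := by
  set g : ℝ × ℝ → ℝ := fun p => h p.1 (p.2 + p.1 / 2) with hg_def
  have hg : ∀ p : ℝ × ℝ, g (4 * p.1, 2 * p.2) = (2 : ℝ) • g p := by
    intro p
    simp only [hg_def, smul_eq_mul, heq p.1]
    ring_nf
  have hd : DifferentiableAt ℝ g 0 :=
    (hana _ trivial).differentiableAt.comp (f := fun p : ℝ × ℝ => (p.1, p.2 + p.1 / 2)) 0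
      (by fun_prop)
  obtain ⟨c, hc⟩ := exists_eq_smul_of_scaling hd hg
  refine ⟨c, fun t x => ?_⟩
  have := hc (t, x - t / 2)
  simp only [hg_def, sub_add_cancel, smul_eq_mul] at this
  linarith
end

section
/- Let h : ℝ × ℝ → ℝ be real-analytic on ℝ² and satisfy h(t, x) = (1/2) h(4t, 2x + t) for all t, x ∈ ℝ. Then h(0,0) = 0, the partial derivatives at the origin satisfy ∂h/∂t(0,0) = −(1/2) · ∂h/∂x(0,0), and for every n ≥ 2 the n-th iterated (Fréchet) derivative of h at the point (0,0) is the zero multilinear map (i.e., all partial derivatives of h of total order at least 2 vanish at the origin). -/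
/-!
Rewrite the equation as `h = 2 · h ∘ B`, where `B` inverts `(t, x) ↦ (4t, 2x + t)` and has
norm at most `5/8` for the sup norm. Since `B` is linear and fixes the origin, every derivative
`T` of order `n` of `h` at the origin satisfies `T = 2 · T ∘ (B, …, B)`. For `n = 1`, evaluated
at `(1, 0)`, this is the relation between the partials; for `n ≥ 2` it gives
`‖T‖ ≤ 2 (5/8)ⁿ ‖T‖ < ‖T‖` unless `T = 0`.
-/

section FunctionalEquation

variable {𝕜 E F : Type*} [NontriviallyNormedField 𝕜] [NormedAddCommGroup E] [NormedSpace 𝕜 E]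
  [NormedAddCommGroup F] [NormedSpace 𝕜 F] {f : E → F} {A : E →L[𝕜] E} {c : 𝕜}

theorem fderiv_zero_eq_smul_comp (hf : DifferentiableAt 𝕜 f 0) (hfA : ∀ x, f x = c • f (A x)) :
    fderiv 𝕜 f 0 = c • (fderiv 𝕜 f 0).comp A := by
  have hf' : HasFDerivAt f (fderiv 𝕜 f 0) (A 0) := by
    simpa only [map_zero] using hf.hasFDerivAt
  have hcomp := (hf'.comp 0 A.hasFDerivAt).const_smul c
  rw [show c • (f ∘ A) = f from funext fun x => (hfA x).symm] at hcomp
  exact hf.hasFDerivAt.unique hcomp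

theorem iteratedFDeriv_zero_eq_smul_compContinuousLinearMap {n : ℕ} (hf : ContDiff 𝕜 n f)
    (hfA : ∀ x, f x = c • f (A x)) :
    iteratedFDeriv 𝕜 n f 0 =
      c • (iteratedFDeriv 𝕜 n f 0).compContinuousLinearMap fun _ => A := by
  conv_lhs => rw [show f = c • (f ∘ A) from funext hfA]
  rw [iteratedFDeriv_const_smul_apply (hf.comp A.contDiff).contDiffAt,
    A.iteratedFDeriv_comp_right hf 0 le_rfl, map_zero]

theorem ContinuousMultilinearMap.eq_zero_of_eq_smul_compContinuousLinearMap {n : ℕ}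
    {T : ContinuousMultilinearMap 𝕜 (fun _ : Fin n => E) F}
    (hT : T = c • T.compContinuousLinearMap fun _ => A) (hlt : ‖c‖ * ‖A‖ ^ n < 1) : T = 0 := by
  have hle : ‖T‖ ≤ ‖c‖ * ‖A‖ ^ n * ‖T‖ :=
    calc ‖T‖ = ‖c‖ * ‖T.compContinuousLinearMap fun _ => A‖ := by
          conv_lhs => rw [hT]
          exact norm_smul _ _
      _ ≤ ‖c‖ * (‖T‖ * ∏ _ : Fin n, ‖A‖) :=
          mul_le_mul_of_nonneg_left (T.norm_compContinuousLinearMap_le _) (norm_nonneg c)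
      _ = ‖c‖ * ‖A‖ ^ n * ‖T‖ := by simp only [Finset.prod_const, Finset.card_fin]; ring
  exact norm_le_zero_iff.mp (by nlinarith [norm_nonneg T])

end FunctionalEquation

/-- The inverse of `(t, x) ↦ (4t, 2x + t)`. -/
noncomputable def invScaling : ℝ × ℝ →L[ℝ] ℝ × ℝ :=
  ((1 / 4 : ℝ) • ContinuousLinearMap.fst ℝ ℝ ℝ).prod
    ((1 / 2 : ℝ) • ContinuousLinearMap.snd ℝ ℝ ℝ - (1 / 8 : ℝ) • ContinuousLinearMap.fst ℝ ℝ ℝ)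

theorem invScaling_apply (p : ℝ × ℝ) : invScaling p = (p.1 / 4, p.2 / 2 - p.1 / 8) := by
  simp only [invScaling, ContinuousLinearMap.prod_apply, smul_apply,
    sub_apply, ContinuousLinearMap.coe_fst', ContinuousLinearMap.coe_snd',
    smul_eq_mul, Prod.mk.injEq]
  constructor <;> ring

theorem norm_invScaling_le : ‖invScaling‖ ≤ 5 / 8 := by
  refine invScaling.opNorm_le_bound (by norm_num) fun p => ?_
  have h1 : |p.1| ≤ ‖p‖ := le_max_left _ _
  have h2 : |p.2| ≤ ‖p‖ := le_max_right _ _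
  rw [invScaling_apply, Prod.norm_def, Real.norm_eq_abs, Real.norm_eq_abs]
  refine max_le ?_ ?_
  · rw [abs_div, abs_of_pos (by norm_num : (0 : ℝ) < 4)]
    linarith [abs_nonneg p.1]
  · calc |p.2 / 2 - p.1 / 8| ≤ |p.2 / 2| + |p.1 / 8| := abs_sub _ _
      _ = |p.2| / 2 + |p.1| / 8 := by simp only [abs_div, Nat.abs_ofNat]
      _ ≤ 5 / 8 * ‖p‖ := by linarith

theorem uncurry_eq_two_smul_comp_invScaling {h : ℝ → ℝ → ℝ}
    (heq : ∀ t x : ℝ, h t x = (1 / 2) * h (4 * t) (2 * x + t)) (p : ℝ × ℝ) :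
    Function.uncurry h p = (2 : ℝ) • Function.uncurry h (invScaling p) := by
  obtain ⟨t, x⟩ := p
  have := heq (t / 4) (x / 2 - t / 8)
  rw [show 4 * (t / 4) = t by ring, show 2 * (x / 2 - t / 8) + t / 4 = x by ring] at this
  rw [invScaling_apply, smul_eq_mul, Function.uncurry_apply_pair, Function.uncurry_apply_pair]
  linarith

/-- For a real-analytic solution `h` of `h (t, x) = (1/2) h (4t, 2x + t)`
on `ℝ²`: `h (0,0) = 0`, the first partial derivatives at the origin satisfy
`∂h/∂t (0,0) = −(1/2) ∂h/∂x (0,0)`, and every iterated Fréchet derivative of order `n ≥ 2`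
vanishes at the origin. -/
theorem stmt8 (h : ℝ → ℝ → ℝ)
    (hana : AnalyticOnNhd ℝ (Function.uncurry h) Set.univ)
    (heq : ∀ t x : ℝ, h t x = (1 / 2) * h (4 * t) (2 * x + t)) :
    h 0 0 = 0 ∧
    fderiv ℝ (Function.uncurry h) (0, 0) (1, 0) =
      -(1 / 2) * fderiv ℝ (Function.uncurry h) (0, 0) (0, 1) ∧
    ∀ n : ℕ, 2 ≤ n → iteratedFDeriv ℝ n (Function.uncurry h) (0, 0) = 0 := by
  have hsmooth {n : ℕ} : ContDiff ℝ n (Function.uncurry h) := hana.contDiff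
  have hB := uncurry_eq_two_smul_comp_invScaling heq
  refine ⟨by linarith [heq 0 0], ?_, fun n hn => ?_⟩
  · have hD := congrArg (· (1, 0))
      (fderiv_zero_eq_smul_comp (hsmooth (n := 1).differentiable one_ne_zero 0) hB)
    have hsplit : ((1 : ℝ) / 4, (0 : ℝ) / 2 - 1 / 8) =
        (1 / 4 : ℝ) • (1, 0) - (1 / 8 : ℝ) • (0, 1) := by
      norm_num
    simp only [smul_apply, ContinuousLinearMap.comp_apply, invScaling_apply,
      hsplit, map_sub, map_smul, smul_eq_mul] at hD
    rw [Prod.mk_zero_zero]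
    linarith
  · refine ContinuousMultilinearMap.eq_zero_of_eq_smul_compContinuousLinearMap
      (iteratedFDeriv_zero_eq_smul_compContinuousLinearMap hsmooth hB) ?_
    calc ‖(2 : ℝ)‖ * ‖invScaling‖ ^ n ≤ 2 * (5 / 8) ^ 2 := by
          rw [Real.norm_two]
          gcongr
          exact (pow_le_pow_left₀ (norm_nonneg _) norm_invScaling_le n).trans
            (pow_le_pow_of_le_one (by norm_num) (by norm_num) hn)
      _ < 1 := by norm_num
end
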